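/- A subset S of {1,...,n} of states is herdable if and only if there exists a vector k in range(C) with k_i > 0 for every i in S, where C is the controllability matrix. -/

import Mathlib

open MeasureTheory

/-- The state of the LTI system `x' = A x + B u` at time `tf`, starting from `x0`
under the input `u`:  `x(tf) = exp(tf A) x0 + ∫_0^tf exp((tf-τ) A) B u(τ) dτ`. -/
noncomputable def stateAt {n m : ℕ} (A : Matrix (Fin n) (Fin n) ℝ) (B : Matrix (Fin n) (Fin m) ℝ)
    (x0 : Fin n → ℝ) (u : ℝ → Fin m → ℝ) (tf : ℝ) : Fin n → ℝ :=
  (NormedSpace.exp (tf • A)).mulVec x0 +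
    ∫ τ in (0:ℝ)..tf, (NormedSpace.exp ((tf - τ) • A) * B).mulVec (u τ)

/-- The input `u` is admissible (integrable) on `[0, tf]`. -/
def ValidInput {n m : ℕ} (A : Matrix (Fin n) (Fin n) ℝ) (B : Matrix (Fin n) (Fin m) ℝ)
    (tf : ℝ) (u : ℝ → Fin m → ℝ) : Prop :=
  IntervalIntegrable (fun τ => (NormedSpace.exp ((tf - τ) • A) * B).mulVec (u τ)) volume 0 tf

/-- A subset `S` of the states is herdable: from every initial condition and for every
threshold `h ≥ 0` there are a finite time `tf > 0` and an input driving every state in `S`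
at least to `h` at time `tf`. -/
def Herdable {n m : ℕ} (A : Matrix (Fin n) (Fin n) ℝ) (B : Matrix (Fin n) (Fin m) ℝ)
    (S : Set (Fin n)) : Prop :=
  ∀ x0 : Fin n → ℝ, ∀ h : ℝ, 0 ≤ h →
    ∃ tf : ℝ, 0 < tf ∧ ∃ u : ℝ → Fin m → ℝ, ValidInput A B tf u ∧
      ∀ i ∈ S, h ≤ stateAt A B x0 u tf i

/-- The controllability matrix `C = [B, AB, …, A^{n-1} B]`; the column indexed by
`(d, j)` is the `j`-th column of `A^d B`. -/
def ctrb {n m : ℕ} (A : Matrix (Fin n) (Fin n) ℝ) (B : Matrix (Fin n) (Fin m) ℝ) :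
    Matrix (Fin n) (Fin n × Fin m) ℝ := fun i p => (A ^ (p.1 : ℕ) * B) i p.2

/-!
The state at time `tf` is `exp(tf A) x0` plus a vector of the subspace `reachable A B tf` of
states reachable from `0`, and for every `tf > 0` this subspace is exactly the range of `C`;
herdability then comes down to scaling a vector of that range that is positive on `S`.

`reachable ⊆ range C`: `exp(sA) = ∑ sᵖ/p! Aᵖ`, and by Cayley–Hamilton every `Aᵖ B w` lies in
the closed subspace `range C`, which also contains the integrals of functions valued in it.

`range C ⊆ reachable`: switching the input `w` on during the last `s` units of time reaches
`∫₀ˢ exp(σA) B w dσ`. Differentiating in `s` inside the closed subspace `reachable` gives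
`exp(sA) B w`, then `exp(sA) Aᵈ B w` for every `d`, and `s = 0` leaves `Aᵈ B w`.
-/

open NormedSpace Set
open scoped Matrix

theorem Submodule.intervalIntegral_mem {E : Type*} [NormedAddCommGroup E] [NormedSpace ℝ E]
    [FiniteDimensional ℝ E] (V : Submodule ℝ E) {f : ℝ → E} {a b : ℝ}
    (hf : IntervalIntegrable f volume a b) (hV : ∀ t, f t ∈ V) : ∫ t in a..b, f t ∈ V := by
  by_contra hx
  obtain ⟨φ, hφx, hφV⟩ := V.exists_dual_map_eq_bot_of_notMem hx inferInstance
  have hφ : ∀ t, φ (f t) = 0 := fun t =>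
    (Submodule.mem_bot ℝ).mp (hφV ▸ Submodule.mem_map_of_mem (hV t))
  apply hφx
  rw [← LinearMap.coe_toContinuousLinearMap' φ,
    ← ContinuousLinearMap.intervalIntegral_comp_comm _ hf]
  simp [hφ]

theorem HasDerivAt.mem_of_mapsTo_Icc {E : Type*} [NormedAddCommGroup E] [NormedSpace ℝ E]
    {V : Submodule ℝ E} (hV : IsClosed (V : Set E)) {c : ℝ → E} {a b s : ℝ} {v : E}
    (hab : a < b) (hc : MapsTo c (Icc a b) V) (hs : s ∈ Icc a b) (hd : HasDerivAt c v s) :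
    v ∈ V := by
  have hderiv : derivWithin c (Icc a b) s = v :=
    hd.hasDerivWithinAt.derivWithin (uniqueDiffOn_Icc hab s hs)
  have hspan : Submodule.span ℝ (c '' Icc a b) ≤ V := Submodule.span_le.mpr hc.image_subset
  refine hV.closure_subset_iff.mpr hspan ?_
  exact range_derivWithin_subset_closure_span_image c (by simp) ⟨s, hderiv⟩

theorem exists_forall_le_add_mul {ι : Type*} [Finite ι] {S : Set ι} {k : ι → ℝ}
    (hk : ∀ i ∈ S, 0 < k i) (v : ι → ℝ) (h : ℝ) : ∃ c : ℝ, ∀ i ∈ S, h ≤ v i + c * k i := by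
  obtain ⟨c, hc⟩ := Finite.exists_le fun i => (h - v i) / k i
  refine ⟨c, fun i hi => ?_⟩
  have := (div_le_iff₀ (hk i hi)).mp (hc i)
  linarith

namespace Matrix

theorem pow_mem_span_pow {R : Type*} [CommRing R] [Nontrivial R] {n : ℕ}
    (A : Matrix (Fin n) (Fin n) R) (p : ℕ) :
    A ^ p ∈ Submodule.span R (range fun d : Fin n => A ^ (d : ℕ)) := by
  rcases n.eq_zero_or_pos with rfl | hn
  · rw [Subsingleton.elim (A ^ p) 0]
    exact zero_mem _
  have hdim : A.charpoly.natDegree = n := by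
    rw [A.charpoly_natDegree_eq_dim, Fintype.card_fin]
  have hne : A.charpoly ≠ 1 := fun h => by
    rw [h, Polynomial.natDegree_one] at hdim
    omega
  have hdeg := Polynomial.natDegree_modByMonic_lt (Polynomial.X ^ p) A.charpoly_monic hne
  rw [hdim] at hdeg
  rw [pow_eq_aeval_mod_charpoly, Polynomial.aeval_eq_sum_range' hdeg]
  exact Submodule.sum_mem _ fun d hd =>
    Submodule.smul_mem _ _ (Submodule.subset_span ⟨⟨d, Finset.mem_range.mp hd⟩, rfl⟩)

variable {ι : Type*} [Fintype ι] [DecidableEq ι]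

theorem exp_smul_mulVec_mem (A : Matrix ι ι ℝ) {V : Submodule ℝ (ι → ℝ)} {v : ι → ℝ}
    (hv : ∀ p : ℕ, A ^ p *ᵥ v ∈ V) (t : ℝ) : exp (t • A) *ᵥ v ∈ V := by
  let W := V.comap ((mulVecBilin ℝ ℝ).flip v)
  have hW : IsClosed (W : Set (Matrix ι ι ℝ)) :=
    V.closed_of_finiteDimensional.preimage (LinearMap.continuous_of_finiteDimensional _)
  have hexp : exp (t • A) ∈ W := by
    rw [exp_eq_tsum ℝ]
    exact tsum_mem hW fun p => W.smul_mem _ (smul_pow t A p ▸ W.smul_mem _ (hv p))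
  exact hexp

theorem hasDerivAt_exp_smul_mulVec (A : Matrix ι ι ℝ) (x : ι → ℝ) (s : ℝ) :
    HasDerivAt (fun t : ℝ => exp (t • A) *ᵥ x) (exp (s • A) *ᵥ (A *ᵥ x)) s := by
  -- `NormedSpace.exp` depends only on the topology, so any algebra norm can be used here.
  let _ : NormedRing (Matrix ι ι ℝ) := Matrix.linftyOpNormedRing
  let _ : NormedAlgebra ℝ (Matrix ι ι ℝ) := Matrix.linftyOpNormedAlgebra
  let L : Matrix ι ι ℝ →L[ℝ] (ι → ℝ) :=
    LinearMap.toContinuousLinearMap ((mulVecBilin ℝ ℝ).flip x)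
  rw [mulVec_mulVec]
  exact L.hasFDerivAt.comp_hasDerivAt s (hasDerivAt_exp_smul_const A s)

theorem continuous_exp_smul_mulVec (A : Matrix ι ι ℝ) (x : ι → ℝ) :
    Continuous fun t : ℝ => exp (t • A) *ᵥ x :=
  continuous_iff_continuousAt.mpr fun s => (A.hasDerivAt_exp_smul_mulVec x s).continuousAt

end Matrix

section ControlSystem

variable {n m : ℕ} (A : Matrix (Fin n) (Fin n) ℝ) (B : Matrix (Fin n) (Fin m) ℝ)

theorem ctrb_mulVec (y : Fin n × Fin m → ℝ) :
    ctrb A B *ᵥ y = ∑ d : Fin n, (A ^ (d : ℕ) * B) *ᵥ fun j => y (d, j) := by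
  ext i
  simp only [Matrix.mulVec, dotProduct, ctrb, Fintype.sum_prod_type, Finset.sum_apply]

theorem pow_mulVec_mem_range_ctrb (p : ℕ) (w : Fin m → ℝ) :
    A ^ p *ᵥ (B *ᵥ w) ∈ LinearMap.range (ctrb A B).mulVecLin := by
  have hgen : ∀ d : Fin n, (A ^ (d : ℕ) * B) *ᵥ w ∈ LinearMap.range (ctrb A B).mulVecLin :=
    fun d => ⟨fun q => (Pi.single d w : Fin n → Fin m → ℝ) q.1 q.2, by
      rw [Matrix.mulVecLin_apply, ctrb_mulVec, Fintype.sum_eq_single d fun d' hd' => by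
        simp only [Pi.single_eq_of_ne hd']; exact Matrix.mulVec_zero _]
      simp⟩
  have hspan : Submodule.span ℝ (range fun d : Fin n => A ^ (d : ℕ)) ≤
      (LinearMap.range (ctrb A B).mulVecLin).comap ((Matrix.mulVecBilin ℝ ℝ).flip (B *ᵥ w)) := by
    rw [Submodule.span_le]
    rintro _ ⟨d, rfl⟩
    simpa [Matrix.mulVec_mulVec] using hgen d
  exact hspan (A.pow_mem_span_pow p)

theorem stateAt_zero_mem_range_ctrb {u : ℝ → Fin m → ℝ} {tf : ℝ} (hu : ValidInput A B tf u) :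
    stateAt A B 0 u tf ∈ LinearMap.range (ctrb A B).mulVecLin := by
  rw [stateAt, Matrix.mulVec_zero, zero_add]
  refine Submodule.intervalIntegral_mem _ hu fun τ => ?_
  rw [← Matrix.mulVec_mulVec]
  exact A.exp_smul_mulVec_mem (fun p => pow_mulVec_mem_range_ctrb A B p (u τ)) (tf - τ)

def reachable (tf : ℝ) : Submodule ℝ (Fin n → ℝ) where
  carrier := {x | ∃ u, ValidInput A B tf u ∧
    ∫ τ in (0:ℝ)..tf, (exp ((tf - τ) • A) * B) *ᵥ u τ = x}
  zero_mem' := ⟨0, by simp [ValidInput], by simp⟩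
  add_mem' := by
    rintro _ _ ⟨u₁, hu₁, rfl⟩ ⟨u₂, hu₂, rfl⟩
    refine ⟨u₁ + u₂, ?_, ?_⟩
    · simpa [ValidInput, Matrix.mulVec_add] using hu₁.add hu₂
    · simpa [Matrix.mulVec_add] using intervalIntegral.integral_add hu₁ hu₂
  smul_mem' := by
    rintro c _ ⟨u, hu, rfl⟩
    refine ⟨c • u, ?_, ?_⟩
    · simp only [ValidInput, Pi.smul_apply, Matrix.mulVec_smul]
      exact hu.smul c
    · simp [Matrix.mulVec_smul, intervalIntegral.integral_smul]

theorem integral_exp_smul_mulVec_mem_reachable {tf s : ℝ} (hs : s ∈ Icc 0 tf) (w : Fin m → ℝ) :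
    ∫ σ in (0:ℝ)..s, exp (σ • A) *ᵥ (B *ᵥ w) ∈ reachable A B tf := by
  set F : ℝ → Fin n → ℝ := fun σ => exp (σ • A) *ᵥ (B *ᵥ w)
  have hF : Continuous F := A.continuous_exp_smul_mulVec _
  set I := Ioc (tf - s) tf
  have hintegrand : (fun τ => (exp ((tf - τ) • A) * B) *ᵥ I.indicator (fun _ => w) τ) =
      I.indicator fun τ => F (tf - τ) := by
    ext1 τ
    by_cases hτ : τ ∈ I <;> simp [hτ, F, Matrix.mulVec_mulVec]
  refine ⟨I.indicator fun _ => w, ?_, ?_⟩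
  · rw [ValidInput, hintegrand, intervalIntegrable_iff_integrableOn_Ioc_of_le (hs.1.trans hs.2)]
    exact ((hF.comp (continuous_const.sub continuous_id)).integrableOn_Ioc).indicator
      measurableSet_Ioc
  · have hI : I ⊆ Ioc 0 tf := Ioc_subset_Ioc_left (by linarith [hs.2])
    rw [hintegrand, intervalIntegral.integral_of_le (hs.1.trans hs.2),
      integral_indicator measurableSet_Ioc, Measure.restrict_restrict measurableSet_Ioc,
      inter_eq_self_of_subset_left hI, ← intervalIntegral.integral_of_le (by linarith [hs.1]),
      intervalIntegral.integral_comp_sub_left F tf]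
    simp

theorem exp_smul_mulVec_pow_mem_reachable {tf : ℝ} (htf : 0 < tf) (w : Fin m → ℝ) (d : ℕ) :
    MapsTo (fun s : ℝ => exp (s • A) *ᵥ (A ^ d *ᵥ (B *ᵥ w))) (Icc 0 tf) (reachable A B tf) := by
  have hV := (reachable A B tf).closed_of_finiteDimensional
  induction d with
  | zero =>
    intro s hs
    have hF := A.continuous_exp_smul_mulVec (B *ᵥ w)
    have hd := intervalIntegral.integral_hasDerivAt_right (hF.intervalIntegrable 0 s)
      hF.aestronglyMeasurable.stronglyMeasurableAtFilter hF.continuousAt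
    simpa using hd.mem_of_mapsTo_Icc hV htf
      (fun σ hσ => integral_exp_smul_mulVec_mem_reachable A B hσ w) hs
  | succ d ih =>
    intro s hs
    dsimp only
    rw [pow_succ', ← Matrix.mulVec_mulVec]
    exact (A.hasDerivAt_exp_smul_mulVec _ s).mem_of_mapsTo_Icc hV htf ih hs

theorem range_ctrb_le_reachable {tf : ℝ} (htf : 0 < tf) :
    LinearMap.range (ctrb A B).mulVecLin ≤ reachable A B tf := by
  rintro _ ⟨y, rfl⟩
  rw [Matrix.mulVecLin_apply, ctrb_mulVec]
  refine Submodule.sum_mem _ fun d _ => ?_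
  simpa [Matrix.mulVec_mulVec] using
    exp_smul_mulVec_pow_mem_reachable A B htf (fun j => y (d, j)) d ⟨le_rfl, htf.le⟩

end ControlSystem

/-- A subset `S` of states is herdable iff there is a vector `k` in the range of the
controllability matrix with `k i > 0` for every `i ∈ S`. -/
theorem herdable_iff_range_ctrb {n m : ℕ}
    (A : Matrix (Fin n) (Fin n) ℝ) (B : Matrix (Fin n) (Fin m) ℝ) (S : Set (Fin n)) :
    Herdable A B S ↔
      ∃ k : Fin n → ℝ, (∃ y : Fin n × Fin m → ℝ, (ctrb A B).mulVec y = k) ∧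
        ∀ i ∈ S, 0 < k i := by
  constructor
  · intro hS
    obtain ⟨tf, -, u, hu, hu_ge⟩ := hS 0 1 zero_le_one
    exact ⟨_, stateAt_zero_mem_range_ctrb A B hu, fun i hi => one_pos.trans_le (hu_ge i hi)⟩
  · rintro ⟨k, hk, hk_pos⟩ x0 h -
    obtain ⟨c, hc⟩ := exists_forall_le_add_mul hk_pos (exp ((1 : ℝ) • A) *ᵥ x0) h
    obtain ⟨u, hu, hu_state⟩ := range_ctrb_le_reachable A B one_pos (Submodule.smul_mem _ c hk)
    refine ⟨1, one_pos, u, hu, fun i hi => ?_⟩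
    simpa [stateAt, hu_state] using hc i hi
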